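/- arXiv:2506.06228 — 4 statements merged into one kernel-verified Lean document; each statement's English description precedes it below -/
import Mathlib

section
/- Let (Ω, P) be a probability space, T > 0, c1, c2, c3 > 0, q ∈ ℝ, δ ∈ (0,1). Let X : Ω × [0,T] → ℝ^n be a family of trajectories, V : ℝ^n → ℝ with c1·‖y‖² ≤ V(y) ≤ c2·‖y‖² for all y, and D, W : Ω × [0,T] → ℝ with W(ω,t) ≥ 0. Suppose that for every ω ∈ Ω the map t ↦ V(X(ω,t)) is differentiable on [0,T] with derivative at most -c3·V(X(ω,t)) + W(ω,t)·(D(ω,t) - q), that the event E = {ω : ∀ t ∈ [0,T], D(ω,t) ≤ q} is measurable with P(E) ≥ 1 - δ, and that the events A = {ω : ∀ t ∈ [0,T], V(X(ω,t)) ≤ V(X(ω,0))·exp(-c3·t)} and B = {ω : ∀ t ∈ [0,T], ‖X(ω,t)‖ ≤ √(c2/c1)·‖X(ω,0)‖·exp(-c3·t/2)} are measurable. Then P(A) ≥ 1 - δ and P(B) ≥ 1 - δ. -/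
open MeasureTheory

lemma crclf_V_bound {T c3 : ℝ} (hT : 0 < T) (f : ℝ → ℝ)
    (hderiv : ∀ t ∈ Set.Icc (0 : ℝ) T, ∃ v' : ℝ,
      HasDerivWithinAt f v' (Set.Icc (0 : ℝ) T) t ∧ v' ≤ -c3 * f t) :
    ∀ t ∈ Set.Icc (0 : ℝ) T, f t ≤ f 0 * Real.exp (-c3 * t) := by
  set g : ℝ → ℝ := fun s => f s * Real.exp (c3 * s) with hg
  have hcont : ContinuousOn g (Set.Icc 0 T) := by
    apply ContinuousOn.mul
    · intro t ht
      obtain ⟨v', hv', _⟩ := hderiv t ht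
      exact hv'.continuousWithinAt
    · exact (Real.continuous_exp.comp (continuous_const.mul continuous_id)).continuousOn
  have hint : ∀ t, ∀ ht : t ∈ Set.Ioo (0 : ℝ) T,
      HasDerivAt g ((Classical.choose (hderiv t (Set.Ioo_subset_Icc_self ht))) *
        Real.exp (c3 * t) + f t * (Real.exp (c3 * t) * (c3 * 1))) t := by
    intro t ht
    have ht' : t ∈ Set.Icc (0 : ℝ) T := Set.Ioo_subset_Icc_self ht
    have hv := (Classical.choose_spec (hderiv t ht')).1
    have hmem : Set.Icc (0 : ℝ) T ∈ nhds t :=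
      mem_nhds_iff.mpr ⟨Set.Ioo 0 T, Set.Ioo_subset_Icc_self, isOpen_Ioo, ht⟩
    have hf : HasDerivAt f (Classical.choose (hderiv t ht')) t := hv.hasDerivAt hmem
    have he : HasDerivAt (fun s => Real.exp (c3 * s)) (Real.exp (c3 * t) * (c3 * 1)) t :=
      ((hasDerivAt_id t).const_mul c3).exp
    exact hf.mul he
  have hanti : AntitoneOn g (Set.Icc 0 T) := by
    apply antitoneOn_of_deriv_nonpos (convex_Icc 0 T) hcont
    · intro t ht
      rw [interior_Icc] at ht
      exact (hint t ht).differentiableAt.differentiableWithinAt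
    · intro t ht
      rw [interior_Icc] at ht
      rw [(hint t ht).deriv]
      have ht' : t ∈ Set.Icc (0 : ℝ) T := Set.Ioo_subset_Icc_self ht
      have hle := (Classical.choose_spec (hderiv t ht')).2
      have hep := Real.exp_pos (c3 * t)
      nlinarith
  intro t ht
  have h0 : (0 : ℝ) ∈ Set.Icc (0 : ℝ) T := ⟨le_refl _, hT.le⟩
  have := hanti h0 ht ht.1
  simp only [hg, mul_zero, Real.exp_zero, mul_one] at this
  have he : Real.exp (-c3 * t) * Real.exp (c3 * t) = 1 := by
    rw [← Real.exp_add]; ring_nf; exact Real.exp_zero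
  have hep := Real.exp_pos (c3 * t)
  have hen := (Real.exp_pos (-c3 * t)).le
  have key : f t * (Real.exp (c3 * t) * Real.exp (-c3 * t)) ≤ f 0 * Real.exp (-c3 * t) := by
    rw [← mul_assoc]; exact mul_le_mul_of_nonneg_right this hen
  rwa [mul_comm (Real.exp (c3 * t)) _, he, mul_one] at key

/-- CR-CLF theorem: with probability at least `1 - δ` the model uncertainty stays below the
conformal quantile `q`, in which case the Lyapunov differential inequality forces
`V (X ω t) ≤ V (X ω 0) exp (-c3 t)` and
`‖X ω t‖ ≤ √(c2/c1) ‖X ω 0‖ exp (-c3 t / 2)` on `[0,T]`; hence each of these events has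
probability at least `1 - δ`. -/
theorem stmt9 (n : ℕ) (Ω : Type*) [MeasurableSpace Ω] (P : Measure Ω) [IsProbabilityMeasure P]
    (T c1 c2 c3 q δ : ℝ) (hT : 0 < T) (hc1 : 0 < c1) (hc2 : 0 < c2) (hc3 : 0 < c3)
    (hδ : δ ∈ Set.Ioo (0 : ℝ) 1)
    (X : Ω → ℝ → EuclideanSpace ℝ (Fin n)) (V : EuclideanSpace ℝ (Fin n) → ℝ)
    (D W : Ω → ℝ → ℝ)
    (hV : ∀ y, c1 * ‖y‖ ^ 2 ≤ V y ∧ V y ≤ c2 * ‖y‖ ^ 2)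
    (hW : ∀ ω t, 0 ≤ W ω t)
    (hderiv : ∀ ω, ∀ t ∈ Set.Icc (0 : ℝ) T, ∃ v' : ℝ,
      HasDerivWithinAt (fun s => V (X ω s)) v' (Set.Icc (0 : ℝ) T) t ∧
      v' ≤ -c3 * V (X ω t) + W ω t * (D ω t - q))
    (hEmeas : MeasurableSet {ω | ∀ t ∈ Set.Icc (0 : ℝ) T, D ω t ≤ q})
    (hE : ENNReal.ofReal (1 - δ) ≤ P {ω | ∀ t ∈ Set.Icc (0 : ℝ) T, D ω t ≤ q})
    (hAmeas : MeasurableSet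
      {ω | ∀ t ∈ Set.Icc (0 : ℝ) T, V (X ω t) ≤ V (X ω 0) * Real.exp (-c3 * t)})
    (hBmeas : MeasurableSet
      {ω | ∀ t ∈ Set.Icc (0 : ℝ) T,
        ‖X ω t‖ ≤ Real.sqrt (c2 / c1) * ‖X ω 0‖ * Real.exp (-c3 * t / 2)}) :
    ENNReal.ofReal (1 - δ) ≤
      P {ω | ∀ t ∈ Set.Icc (0 : ℝ) T, V (X ω t) ≤ V (X ω 0) * Real.exp (-c3 * t)} ∧
    ENNReal.ofReal (1 - δ) ≤
      P {ω | ∀ t ∈ Set.Icc (0 : ℝ) T,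
        ‖X ω t‖ ≤ Real.sqrt (c2 / c1) * ‖X ω 0‖ * Real.exp (-c3 * t / 2)} := by
  -- On the event E, the V-bound holds
  have hEA : {ω | ∀ t ∈ Set.Icc (0 : ℝ) T, D ω t ≤ q} ⊆
      {ω | ∀ t ∈ Set.Icc (0 : ℝ) T, V (X ω t) ≤ V (X ω 0) * Real.exp (-c3 * t)} := by
    intro ω hω
    apply crclf_V_bound hT (fun s => V (X ω s))
    intro t ht
    obtain ⟨v', hv', hle⟩ := hderiv ω t ht
    refine ⟨v', hv', ?_⟩
    have h1 : D ω t - q ≤ 0 := sub_nonpos.mpr (hω t ht)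
    have h2 := mul_nonpos_of_nonneg_of_nonpos (hW ω t) h1
    linarith
  have hEB : {ω | ∀ t ∈ Set.Icc (0 : ℝ) T, D ω t ≤ q} ⊆
      {ω | ∀ t ∈ Set.Icc (0 : ℝ) T,
        ‖X ω t‖ ≤ Real.sqrt (c2 / c1) * ‖X ω 0‖ * Real.exp (-c3 * t / 2)} := by
    intro ω hω t ht
    have hVb := hEA hω t ht
    have h1 := (hV (X ω t)).1
    have h2 := (hV (X ω 0)).2
    have hep := Real.exp_pos (-c3 * t)
    -- ‖X ω t‖² ≤ (c2/c1) ‖X ω 0‖² exp(-c3 t)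
    have hsq : ‖X ω t‖ ^ 2 ≤ (Real.sqrt (c2 / c1) * ‖X ω 0‖ * Real.exp (-c3 * t / 2)) ^ 2 := by
      have hs : Real.sqrt (c2 / c1) ^ 2 = c2 / c1 :=
        Real.sq_sqrt (div_nonneg hc2.le hc1.le)
      have hee : Real.exp (-c3 * t / 2) ^ 2 = Real.exp (-c3 * t) := by
        rw [sq, ← Real.exp_add]; ring_nf
      have : (Real.sqrt (c2 / c1) * ‖X ω 0‖ * Real.exp (-c3 * t / 2)) ^ 2
          = c2 / c1 * ‖X ω 0‖ ^ 2 * Real.exp (-c3 * t) := by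
        rw [mul_pow, mul_pow, hs, hee]
      rw [this]
      rw [div_mul_eq_mul_div, div_mul_eq_mul_div, le_div_iff₀ hc1]
      nlinarith
    have hrhs : 0 ≤ Real.sqrt (c2 / c1) * ‖X ω 0‖ * Real.exp (-c3 * t / 2) :=
      mul_nonneg (mul_nonneg (Real.sqrt_nonneg _) (norm_nonneg _)) (Real.exp_pos _).le
    nlinarith [norm_nonneg (X ω t)]
  exact ⟨le_trans hE (measure_mono hEA), le_trans hE (measure_mono hEB)⟩
end

section
/- Let (Ω, P) be a probability space, T > 0, γ > 0, q ∈ ℝ, δ ∈ (0,1). Let X : Ω × [0,T] → ℝ^n be a family of trajectories, h : ℝ^n → ℝ, and D, W : Ω × [0,T] → ℝ with W(ω,t) ≥ 0. Suppose that for every ω ∈ Ω, h(X(ω,0)) ≥ 0 and the map t ↦ h(X(ω,t)) is differentiable on [0,T] with derivative at least -γ·h(X(ω,t)) + W(ω,t)·(q - D(ω,t)), that the event E = {ω : ∀ t ∈ [0,T], D(ω,t) ≤ q} is measurable with P(E) ≥ 1 - δ, and that the event A = {ω : ∀ t ∈ [0,T], h(X(ω,t)) ≥ 0} is measurable. Then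 P(A) ≥ 1 - δ. -/
open MeasureTheory

/-- CR-CBF theorem: with probability at least `1 - δ` the model uncertainty stays below the
conformal quantile `q`, in which case the barrier differential inequality keeps the
trajectory in the safe set `{y | h y ≥ 0}` over `[0,T]`; hence the safety event has
probability at least `1 - δ`. -/
theorem stmt10 (n : ℕ) (Ω : Type*) [MeasurableSpace Ω] (P : Measure Ω) [IsProbabilityMeasure P]
    (T γ q δ : ℝ) (hT : 0 < T) (hγ : 0 < γ) (hδ : δ ∈ Set.Ioo (0 : ℝ) 1)
    (X : Ω → ℝ → EuclideanSpace ℝ (Fin n)) (h : EuclideanSpace ℝ (Fin n) → ℝ)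
    (D W : Ω → ℝ → ℝ)
    (hW : ∀ ω t, 0 ≤ W ω t)
    (h0 : ∀ ω, 0 ≤ h (X ω 0))
    (hderiv : ∀ ω, ∀ t ∈ Set.Icc (0 : ℝ) T, ∃ h' : ℝ,
      HasDerivWithinAt (fun s => h (X ω s)) h' (Set.Icc (0 : ℝ) T) t ∧
      h' ≥ -γ * h (X ω t) + W ω t * (q - D ω t))
    (hEmeas : MeasurableSet {ω | ∀ t ∈ Set.Icc (0 : ℝ) T, D ω t ≤ q})
    (hE : ENNReal.ofReal (1 - δ) ≤ P {ω | ∀ t ∈ Set.Icc (0 : ℝ) T, D ω t ≤ q})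
    (hAmeas : MeasurableSet {ω | ∀ t ∈ Set.Icc (0 : ℝ) T, h (X ω t) ≥ 0}) :
    ENNReal.ofReal (1 - δ) ≤ P {ω | ∀ t ∈ Set.Icc (0 : ℝ) T, h (X ω t) ≥ 0} := by
  refine le_trans hE (measure_mono ?_)
  intro ω hωE
  intro t ht
  -- consider u s = exp (γ s) * h (X ω s)
  set g : ℝ → ℝ := fun s => h (X ω s) with hg
  set u : ℝ → ℝ := fun s => Real.exp (γ * s) * g s with hu
  have hgc : ContinuousOn g (Set.Icc 0 T) := by
    intro x hx
    obtain ⟨h', hd, _⟩ := hderiv ω x hx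
    exact hd.continuousWithinAt
  have huc : ContinuousOn u (Set.Icc 0 T) := by
    exact (Real.continuous_exp.comp (continuous_const.mul continuous_id)).continuousOn.mul hgc
  have hint : interior (Set.Icc (0:ℝ) T) = Set.Ioo 0 T := interior_Icc
  have hderivAt : ∀ x ∈ Set.Ioo (0:ℝ) T, ∃ u',
      HasDerivAt u u' x ∧ 0 ≤ u' := by
    intro x hx
    have hxIcc : x ∈ Set.Icc (0:ℝ) T := Set.Ioo_subset_Icc_self hx
    obtain ⟨h', hd, hge⟩ := hderiv ω x hxIcc
    have hmem : Set.Icc (0:ℝ) T ∈ nhds x := by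
      rw [← hint] at hx
      exact mem_interior_iff_mem_nhds.mp hx
    have hgd : HasDerivAt g h' x := hd.hasDerivAt hmem
    have hed : HasDerivAt (fun s => Real.exp (γ * s)) (Real.exp (γ * x) * γ) x := by
      simpa using (hasDerivAt_id x |>.const_mul γ).exp
    refine ⟨Real.exp (γ * x) * γ * g x + Real.exp (γ * x) * h', hed.mul hgd, ?_⟩
    have hDq : D ω x ≤ q := hωE x hxIcc
    have h1 : 0 ≤ W ω x * (q - D ω x) := mul_nonneg (hW ω x) (by linarith)
    have : γ * g x + h' ≥ W ω x * (q - D ω x) := by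
      have := hge
      simp only [hg] at *
      linarith
    have h2 : 0 ≤ γ * g x + h' := le_trans h1 this
    calc (0:ℝ) ≤ Real.exp (γ * x) * (γ * g x + h') :=
          mul_nonneg (Real.exp_pos _).le h2
      _ = Real.exp (γ * x) * γ * g x + Real.exp (γ * x) * h' := by ring
  have hmono : MonotoneOn u (Set.Icc 0 T) := by
    apply monotoneOn_of_deriv_nonneg (convex_Icc 0 T) huc
    · intro x hx
      rw [hint] at hx
      obtain ⟨u', hd, _⟩ := hderivAt x hx
      exact hd.differentiableAt.differentiableWithinAt
    · intro x hx
      rw [hint] at hx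
      obtain ⟨u', hd, hnn⟩ := hderivAt x hx
      rw [hd.deriv]; exact hnn
  have h0T : (0:ℝ) ∈ Set.Icc (0:ℝ) T := Set.left_mem_Icc.mpr hT.le
  have := hmono h0T ht ht.1
  have hu0 : 0 ≤ u 0 := by
    simp only [hu, hg, mul_zero, Real.exp_zero, one_mul]
    exact h0 ω
  have hut : 0 ≤ u t := le_trans hu0 this
  have : 0 ≤ Real.exp (γ * t) * g t := hut
  have := nonneg_of_mul_nonneg_right this (Real.exp_pos _)
  exact this
end

section
/- Let (Ω, P) be a probability space, T > 0, γ > 0, q ∈ ℝ, r̄ ≥ 0, δ, δ_r ∈ (0,1). Let h, w, d, r : Ω × [0,T] → ℝ be such that for every ω, h(ω,·) is differentiable on [0,T], w(ω,t) ≥ 0, r(ω,t) ≥ 0, and h'(ω,t) ≥ -γ·h(ω,t) + w(ω,t)·(q - d(ω,t)) - r(ω,t) on [0,T]. Suppose the events E = {ω : ∀ t, d(ω,t) ≤ q} and F = {ω : ∀ t, r(ω,t) ≤ r̄} are measurable and independent with P(E) ≥ 1 - δ and P(F) ≥ 1 - δ_r, and the event A = {ω : ∀ t ∈ [0,T], h(ω,t)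 ≥ h(ω,0)·exp(-γ·t) - (r̄/γ)·(1 - exp(-γ·t))} is measurable. Then P(A) ≥ (1-δ)·(1-δ_r). -/
/-!
On the event where `d ≤ q` and `r ≤ r̄` along the whole horizon, the term `w (q - d)` is
nonnegative and the barrier obeys `h' ≥ -γ h - r̄`. Multiplying by the integrating factor
`exp (γ t)` makes `(h + r̄/γ) exp (γ t)` nondecreasing, which is the claimed bound. That event is
the intersection of two independent events, so its probability is at least `(1-δ)(1-δ_r)`.
-/

open MeasureTheory Set

lemma monotoneOn_of_forall_hasDerivWithinAt_nonneg {D : Set ℝ} (hD : Convex ℝ D) {g : ℝ → ℝ}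
    (hg : ∀ x ∈ D, ∃ g', HasDerivWithinAt g g' D x ∧ 0 ≤ g') : MonotoneOn g D := by
  have hderivAt : ∀ x ∈ interior D, ∃ g', HasDerivAt g g' x ∧ 0 ≤ g' := fun x hx => by
    obtain ⟨g', hd, hnonneg⟩ := hg x (interior_subset hx)
    exact ⟨g', hd.hasDerivAt (mem_interior_iff_mem_nhds.1 hx), hnonneg⟩
  refine monotoneOn_of_deriv_nonneg hD (fun x hx => ?_) (fun x hx => ?_) (fun x hx => ?_)
  · obtain ⟨g', hd, -⟩ := hg x hx
    exact hd.continuousWithinAt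
  · obtain ⟨g', hd, -⟩ := hderivAt x hx
    exact hd.differentiableAt.differentiableWithinAt
  · obtain ⟨g', hd, hnonneg⟩ := hderivAt x hx
    rwa [hd.deriv]

lemma HasDerivWithinAt.add_const_mul_exp {f : ℝ → ℝ} {f' γ c t : ℝ} {s : Set ℝ}
    (hf : HasDerivWithinAt f f' s t) :
    HasDerivWithinAt (fun u => (f u + c) * Real.exp (γ * u))
      ((f' + γ * (f t + c)) * Real.exp (γ * t)) s t := by
  have hexp : HasDerivWithinAt (fun u => Real.exp (γ * u)) (Real.exp (γ * t) * γ) s t :=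
    ((hasDerivAt_id t).const_mul γ |>.congr_deriv (mul_one γ)).exp.hasDerivWithinAt
  exact ((hf.add_const c).mul hexp).congr_deriv (by ring)

lemma monotoneOn_add_div_mul_exp_of_hasDerivWithinAt_ge {f : ℝ → ℝ} {γ ρ : ℝ} (hγ : γ ≠ 0)
    {D : Set ℝ} (hD : Convex ℝ D)
    (hf : ∀ t ∈ D, ∃ f', HasDerivWithinAt f f' D t ∧ -γ * f t - ρ ≤ f') :
    MonotoneOn (fun t => (f t + ρ / γ) * Real.exp (γ * t)) D := by
  refine monotoneOn_of_forall_hasDerivWithinAt_nonneg hD fun t ht => ?_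
  obtain ⟨f', hd, hge⟩ := hf t ht
  refine ⟨_, hd.add_const_mul_exp, mul_nonneg ?_ (Real.exp_pos _).le⟩
  rw [mul_add, mul_div_cancel₀ ρ hγ]
  linarith

lemma le_of_hasDerivWithinAt_ge_neg_mul_sub {f : ℝ → ℝ} {γ ρ T : ℝ} (hγ : γ ≠ 0)
    (hf : ∀ t ∈ Icc 0 T, ∃ f', HasDerivWithinAt f f' (Icc 0 T) t ∧ -γ * f t - ρ ≤ f')
    {t : ℝ} (ht : t ∈ Icc 0 T) :
    f 0 * Real.exp (-γ * t) - ρ / γ * (1 - Real.exp (-γ * t)) ≤ f t := by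
  have hmono := monotoneOn_add_div_mul_exp_of_hasDerivWithinAt_ge hγ (convex_Icc 0 T) hf
    ⟨le_rfl, ht.1.trans ht.2⟩ ht ht.1
  simp only [mul_zero, Real.exp_zero, mul_one] at hmono
  have hexp : Real.exp (γ * t) * Real.exp (-γ * t) = 1 := by
    rw [← Real.exp_add, neg_mul, add_neg_cancel, Real.exp_zero]
  have := mul_le_mul_of_nonneg_right hmono (Real.exp_pos (-γ * t)).le
  rw [mul_assoc, hexp] at this
  linarith

lemma ofReal_mul_le_measure_of_indepSet {Ω : Type*} [MeasurableSpace Ω] {P : Measure Ω}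
    {E F A : Set Ω} {a b : ℝ} (ha : 0 ≤ a) (hindep : ProbabilityTheory.IndepSet E F P)
    (hE : ENNReal.ofReal a ≤ P E) (hF : ENNReal.ofReal b ≤ P F) (hsub : E ∩ F ⊆ A) :
    ENNReal.ofReal (a * b) ≤ P A :=
  calc ENNReal.ofReal (a * b) = ENNReal.ofReal a * ENNReal.ofReal b := ENNReal.ofReal_mul ha
    _ ≤ P E * P F := mul_le_mul' hE hF
    _ = P (E ∩ F) := hindep.measure_inter_eq_mul.symm
    _ ≤ P A := measure_mono hsub

theorem stmt12_general (Ω : Type*) [MeasurableSpace Ω] (P : Measure Ω)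
    (T γ q rbar δ δr : ℝ) (hγ : 0 < γ)
    (hδ : δ ∈ Set.Ioo (0 : ℝ) 1)
    (h w d r : Ω → ℝ → ℝ)
    (hw : ∀ ω t, 0 ≤ w ω t)
    (hderiv : ∀ ω, ∀ t ∈ Set.Icc (0 : ℝ) T, ∃ h' : ℝ,
      HasDerivWithinAt (h ω) h' (Set.Icc (0 : ℝ) T) t ∧
      h' ≥ -γ * h ω t + w ω t * (q - d ω t) - r ω t)
    (hindep : ProbabilityTheory.IndepSet
      {ω | ∀ t ∈ Set.Icc (0 : ℝ) T, d ω t ≤ q}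
      {ω | ∀ t ∈ Set.Icc (0 : ℝ) T, r ω t ≤ rbar} P)
    (hE : ENNReal.ofReal (1 - δ) ≤ P {ω | ∀ t ∈ Set.Icc (0 : ℝ) T, d ω t ≤ q})
    (hF : ENNReal.ofReal (1 - δr) ≤ P {ω | ∀ t ∈ Set.Icc (0 : ℝ) T, r ω t ≤ rbar}) :
    ENNReal.ofReal ((1 - δ) * (1 - δr)) ≤
      P {ω | ∀ t ∈ Set.Icc (0 : ℝ) T,
        h ω t ≥ h ω 0 * Real.exp (-γ * t) - (rbar / γ) * (1 - Real.exp (-γ * t))} := by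
  refine ofReal_mul_le_measure_of_indepSet (sub_nonneg.2 hδ.2.le) hindep hE hF ?_
  rintro ω ⟨hdq, hrle⟩ t ht
  refine le_of_hasDerivWithinAt_ge_neg_mul_sub hγ.ne' (fun s hs => ?_) ht
  obtain ⟨h', hd, hge⟩ := hderiv ω s hs
  have hwd : 0 ≤ w ω s * (q - d ω s) := mul_nonneg (hw ω s) (sub_nonneg.2 (hdq s hs))
  exact ⟨h', hd, by linarith [hrle s hs]⟩

/-- Approximated CR-CBF proposition: if the robustified barrier condition is violated by
`r(ω,t) ≥ 0`, where the uncertainty event `E = {d ≤ q}` and the violation event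
`F = {r ≤ r̄}` are independent with probabilities at least `1 - δ` and `1 - δ_r`,
then the relaxed barrier bound holds with probability at least `(1-δ)(1-δ_r)`. -/
theorem stmt12 (Ω : Type*) [MeasurableSpace Ω] (P : Measure Ω) [IsProbabilityMeasure P]
    (T γ q rbar δ δr : ℝ) (hT : 0 < T) (hγ : 0 < γ) (hrbar : 0 ≤ rbar)
    (hδ : δ ∈ Set.Ioo (0 : ℝ) 1) (hδr : δr ∈ Set.Ioo (0 : ℝ) 1)
    (h w d r : Ω → ℝ → ℝ)
    (hw : ∀ ω t, 0 ≤ w ω t) (hr : ∀ ω t, 0 ≤ r ω t)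
    (hderiv : ∀ ω, ∀ t ∈ Set.Icc (0 : ℝ) T, ∃ h' : ℝ,
      HasDerivWithinAt (h ω) h' (Set.Icc (0 : ℝ) T) t ∧
      h' ≥ -γ * h ω t + w ω t * (q - d ω t) - r ω t)
    (hEmeas : MeasurableSet {ω | ∀ t ∈ Set.Icc (0 : ℝ) T, d ω t ≤ q})
    (hFmeas : MeasurableSet {ω | ∀ t ∈ Set.Icc (0 : ℝ) T, r ω t ≤ rbar})
    (hindep : ProbabilityTheory.IndepSet
      {ω | ∀ t ∈ Set.Icc (0 : ℝ) T, d ω t ≤ q}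
      {ω | ∀ t ∈ Set.Icc (0 : ℝ) T, r ω t ≤ rbar} P)
    (hE : ENNReal.ofReal (1 - δ) ≤ P {ω | ∀ t ∈ Set.Icc (0 : ℝ) T, d ω t ≤ q})
    (hF : ENNReal.ofReal (1 - δr) ≤ P {ω | ∀ t ∈ Set.Icc (0 : ℝ) T, r ω t ≤ rbar})
    (hAmeas : MeasurableSet {ω | ∀ t ∈ Set.Icc (0 : ℝ) T,
      h ω t ≥ h ω 0 * Real.exp (-γ * t) - (rbar / γ) * (1 - Real.exp (-γ * t))}) :
    ENNReal.ofReal ((1 - δ) * (1 - δr)) ≤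
      P {ω | ∀ t ∈ Set.Icc (0 : ℝ) T,
        h ω t ≥ h ω 0 * Real.exp (-γ * t) - (rbar / γ) * (1 - Real.exp (-γ * t))} :=
  stmt12_general Ω P T γ q rbar δ δr hγ hδ h w d r hw hderiv hindep hE hF
end

section
/- Let N be a positive natural number, δ ∈ (0,1) with ⌈(1-δ)·(N+1)⌉ ≤ N, and let s₁, ..., s_{N+1} be real-valued random variables on a probability space (Ω, P) that are exchangeable, i.e., for every permutation σ of {1, ..., N+1}, the random vector (s_{σ(1)}, ..., s_{σ(N+1)}) has the same joint law as (s₁, ..., s_{N+1}). Let q denote the k-th smallest value among s₁, ..., s_N, where k = ⌈(1-δ)·(N+1)⌉. Then P(s_{N+1} ≤ q) ≥ 1 - δ. -/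
/-!
Call `#{i | v i < v j}` the strict rank of coordinate `j`. Whatever the ties, the `k` coordinates
that come first in sorted order all have strict rank `< k`, so for every realisation at least `k`
of the `N + 1` scores have strict rank `< k`. By exchangeability each index has strict rank `< k`
with the same probability `p`, hence `(N + 1) p ≥ k ≥ (1 - δ)(N + 1)`. Finally, if fewer than `k`
calibration scores lie strictly below the new score, then the new score is at most the `k`-th
smallest calibration score.
-/

open MeasureTheory

/-- The `k`-th smallest value (1-indexed) of a list of reals. -/
noncomputable def kthSmallest (l : List ℝ) (k : ℕ) : ℝ :=
  (l.mergeSort (fun a b => a ≤ b))[k - 1]!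

open Finset ENNReal

theorem List.countP_ofFn {α : Type*} {n : ℕ} (f : Fin n → α) (p : α → Bool) :
    (List.ofFn f).countP p = #{i | p (f i)} := by
  rw [List.ofFn_eq_map, List.countP_map, card_def, filter_val, ← Multiset.countP_eq_card_filter,
    Fin.univ_def]
  simp [Multiset.coe_countP, Function.comp_def]

theorem le_kthSmallest_of_countP_lt {l : List ℝ} {k : ℕ} {x : ℝ} (hk : k ≤ l.length)
    (hx : l.countP (· < x) < k) : x ≤ kthSmallest l k := by
  set l' := l.mergeSort (fun a b => a ≤ b)
  have hperm : l'.Perm l := List.mergeSort_perm l _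
  have hsorted : l'.Pairwise (· ≤ ·) := List.pairwise_mergeSort' _ l
  have hk' : k - 1 < l'.length := by rw [hperm.length_eq]; omega
  rw [kthSmallest, getElem!_pos l' (k - 1) hk']
  by_contra! hlt
  have htake : ∀ a ∈ l'.take k, a < x := by
    intro a ha
    obtain ⟨i, hi, rfl⟩ := List.mem_iff_getElem.mp ha
    rw [List.length_take] at hi
    rw [List.getElem_take]
    exact (hsorted.rel_get_of_le (a := ⟨i, by omega⟩) (b := ⟨k - 1, hk'⟩)
      (Fin.mk_le_mk.2 (by omega))).trans_lt hlt
  have hcount : (l'.take k).countP (· < x) ≤ l'.countP (· < x) :=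
    (List.take_sublist k l').countP_le
  rw [List.countP_eq_length.2 (by simpa using htake), List.length_take, hperm.countP_eq] at hcount
  omega

section StrictRank

variable {ι α : Type*} [Fintype ι] [LinearOrder α]

def strictRank (v : ι → α) (j : ι) : ℕ := #{i | v i < v j}

theorem strictRank_comp_perm (v : ι → α) (σ : Equiv.Perm ι) (j : ι) :
    strictRank (v ∘ σ) j = strictRank v (σ j) := by
  simp only [strictRank, card_filter, Function.comp_apply]
  exact Equiv.sum_comp σ (fun i => if v i < v (σ j) then 1 else 0)

theorem strictRank_last {n : ℕ} (v : Fin (n + 1) → α) :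
    strictRank v (Fin.last n) = #{i : Fin n | v i.castSucc < v (Fin.last n)} := by
  rw [strictRank, card_filter, Fin.sum_univ_castSucc, card_filter]
  simp

theorem strictRank_sort_le {n : ℕ} (v : Fin n → α) (r : Fin n) :
    strictRank v (Tuple.sort v r) ≤ r := by
  have hsub : ({i | v i < v (Tuple.sort v r)} : Finset (Fin n)) ⊆
      (Iio r).map (Tuple.sort v).toEmbedding := by
    intro i hi
    simp only [mem_filter, mem_univ, true_and] at hi
    exact mem_map_equiv.2 (mem_Iio.2 ((Tuple.monotone_sort v).reflect_lt (by simpa using hi)))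
  simpa [strictRank] using card_le_card hsub

theorem le_card_strictRank_lt {n k : ℕ} (v : Fin n → α) (hk : k ≤ n) :
    k ≤ #{j | strictRank v j < k} := by
  simpa using card_le_card_of_injOn (s := (univ : Finset (Fin k)))
    (fun r => Tuple.sort v (Fin.castLE hk r))
    (fun r _ => by simpa using (strictRank_sort_le v _).trans_lt r.isLt)
    ((Tuple.sort v).injective.comp (Fin.castLE_injective hk)).injOn

end StrictRank

def IsExchangeable {ι α : Type*} [MeasurableSpace α] (μ : Measure (ι → α)) : Prop :=
  ∀ σ : Equiv.Perm ι, μ.map (fun v => v ∘ σ) = μ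

section Exchangeable

variable {ι α : Type*} [Fintype ι] [LinearOrder α] [TopologicalSpace α] [OrderClosedTopology α]
  [SecondCountableTopology α] [MeasurableSpace α] [OpensMeasurableSpace α]

theorem measurableSet_strictRank_lt (j : ι) (k : ℕ) :
    MeasurableSet {v : ι → α | strictRank v j < k} := by
  have : Measurable fun v : ι → α => strictRank v j := by
    simp only [strictRank, card_filter]
    exact Finset.measurable_sum _ fun i _ => Measurable.ite
      (measurableSet_lt (measurable_pi_apply i) (measurable_pi_apply j))
      measurable_const measurable_const
  exact this measurableSet_Iio

theorem IsExchangeable.measure_strictRank_lt_eq [DecidableEq ι] {μ : Measure (ι → α)}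
    (hμ : IsExchangeable μ) (k : ℕ) (i j : ι) :
    μ {v | strictRank v i < k} = μ {v | strictRank v j < k} := by
  have hpre : (fun v : ι → α => v ∘ Equiv.swap i j) ⁻¹' {v | strictRank v j < k}
      = {v | strictRank v i < k} := by
    ext v
    simp [strictRank_comp_perm]
  rw [← hpre, ← Measure.map_apply (by fun_prop) (measurableSet_strictRank_lt j k), hμ]

theorem IsExchangeable.natCast_le_mul_measure_strictRank_lt {n k : ℕ} {μ : Measure (Fin n → α)}
    [IsProbabilityMeasure μ] (hμ : IsExchangeable μ) (hk : k ≤ n) (j : Fin n) :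
    (k : ℝ≥0∞) ≤ n * μ {v | strictRank v j < k} := by
  have hcount (v : Fin n → α) :
      (k : ℝ≥0∞) ≤ ∑ i, {v | strictRank v i < k}.indicator 1 v := by
    simpa [Set.indicator_apply, sum_boole] using le_card_strictRank_lt v hk
  calc (k : ℝ≥0∞) = ∫⁻ _, (k : ℝ≥0∞) ∂μ := by simp
    _ ≤ ∫⁻ v, ∑ i, {v | strictRank v i < k}.indicator 1 v ∂μ := lintegral_mono hcount
    _ = ∑ i, μ {v | strictRank v i < k} := by
      rw [lintegral_finsetSum _ fun i _ =>
        measurable_one.indicator (measurableSet_strictRank_lt i k)]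
      simp only [lintegral_indicator_one (measurableSet_strictRank_lt _ k)]
    _ = n * μ {v | strictRank v j < k} := by
      simp [hμ.measure_strictRank_lt_eq k _ j]

end Exchangeable

theorem stmt13_general (N : ℕ) (δ : ℝ)
    (Ω : Type*) [MeasurableSpace Ω] (P : Measure Ω) [IsProbabilityMeasure P]
    (s : Fin (N + 1) → Ω → ℝ) (hmeas : ∀ i, Measurable (s i))
    (hexch : ∀ σ : Equiv.Perm (Fin (N + 1)),
      Measure.map (fun ω => (fun i => s (σ i) ω)) P
        = Measure.map (fun ω => (fun i => s i ω)) P)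
    (k : ℕ) (hk : k = ⌈(1 - δ) * ((N : ℝ) + 1)⌉₊) (hkN : k ≤ N) :
    ENNReal.ofReal (1 - δ) ≤
      P {ω | s (Fin.last N) ω ≤
        kthSmallest (List.ofFn fun i : Fin N => s i.castSucc ω) k} := by
  set scores : Ω → Fin (N + 1) → ℝ := fun ω i => s i ω
  have hscores : Measurable scores := measurable_pi_lambda _ hmeas
  have hμ : IsExchangeable (P.map scores) := fun σ => by
    rw [Measure.map_map (by fun_prop) hscores]
    exact hexch σ
  set E := scores ⁻¹' {v | strictRank v (Fin.last N) < k}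
  have hE : E ⊆ {ω | s (Fin.last N) ω ≤
      kthSmallest (List.ofFn fun i : Fin N => s i.castSucc ω) k} := fun ω hω =>
    le_kthSmallest_of_countP_lt (by simpa using hkN)
      (by simpa [List.countP_ofFn, strictRank_last, E, scores] using hω)
  have hbound : (k : ℝ≥0∞) ≤ (N + 1 : ℕ) * P E := by
    have := Measure.isProbabilityMeasure_map (μ := P) hscores.aemeasurable
    rw [← Measure.map_apply hscores (measurableSet_strictRank_lt _ _)]
    exact hμ.natCast_le_mul_measure_strictRank_lt (by omega) _
  have hδk : ((N + 1 : ℕ) : ℝ≥0∞) * ENNReal.ofReal (1 - δ) ≤ k := by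
    rw [← ENNReal.ofReal_natCast, ← ENNReal.ofReal_mul (by positivity), ← ENNReal.ofReal_natCast k]
    refine ENNReal.ofReal_le_ofReal ?_
    rw [hk, mul_comm]
    push_cast
    exact Nat.le_ceil _
  calc ENNReal.ofReal (1 - δ) ≤ P E :=
        (ENNReal.mul_le_mul_iff_right (by simp) (by simp)).1 (hδk.trans hbound)
    _ ≤ _ := measure_mono hE

/-- Split conformal prediction coverage guarantee: if the scores
`s 0, …, s N` (calibration scores `s i`, `i < N`, and new score `s N`) are exchangeable,
and `q ω` is the `k`-th smallest calibration score with `k = ⌈(1-δ)(N+1)⌉ ≤ N`, then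
`P (s_{N+1} ≤ q) ≥ 1 - δ`. -/
theorem stmt13 (N : ℕ) (hN : 0 < N) (δ : ℝ) (hδ : δ ∈ Set.Ioo (0 : ℝ) 1)
    (Ω : Type*) [MeasurableSpace Ω] (P : Measure Ω) [IsProbabilityMeasure P]
    (s : Fin (N + 1) → Ω → ℝ) (hmeas : ∀ i, Measurable (s i))
    (hexch : ∀ σ : Equiv.Perm (Fin (N + 1)),
      Measure.map (fun ω => (fun i => s (σ i) ω)) P
        = Measure.map (fun ω => (fun i => s i ω)) P)
    (k : ℕ) (hk : k = ⌈(1 - δ) * ((N : ℝ) + 1)⌉₊) (hkN : k ≤ N) :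
    ENNReal.ofReal (1 - δ) ≤
      P {ω | s (Fin.last N) ω ≤
        kthSmallest (List.ofFn fun i : Fin N => s i.castSucc ω) k} :=
  stmt13_general N δ Ω P s hmeas hexch k hk hkN
end
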